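/- A bad site that fails to become gentle has a bad companion in the annulus. For every omega in Omega, every k >= 0, and every x in L^(l): if x belongs to BB_k(omega) and x does not belong to GG_{k+1}(omega), then there exists y in A_{k+1}(x) := B^(l)_{gamma_{k+1} + Gamma_{k+1}}(x) setminus B^(l)_{(Gamma_{k+1} - 1)/2}(x) such that y belongs to BB_k(omega). -/
import Mathlib


open MeasureTheory Real

/-! Multi-scale geometry of the bad region.

The rescaled lattice `L^(l) = (lℤ)²` is identified with `ℤ²` via the bijection
`i ↦ l·i`; under this identification the rescaled distance `d_l` on `L^(l)` becomes the
ℓ¹ distance on `ℤ²`.  Accordingly, sites of `L^(l)` are represented by points of `ℤ²`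
and all distances below are measured in units of `l`. -/

/-- Sites of the (rescaled) lattice. -/
abbrev Site : Type := ℤ × ℤ

/-- The ℓ¹ distance on the (rescaled) lattice, i.e. `d_l` in units of `l`. -/
def dist1 (x y : Site) : ℕ := (x.1 - y.1).natAbs + (x.2 - y.2).natAbs

/-- The space `Ω = {0,1}^{L^(l)}`; `true` encodes `1` (bad), `false` encodes `0` (good). -/
abbrev Omega : Type := Site → Bool

/-- The closed ball `B^(l)_r(x)` of (real) radius `r` around `x`. -/
def ball1 (r : ℝ) (x : Site) : Set Site := {j | (dist1 x j : ℝ) ≤ r}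

/-- `θ_k := ∑_{h=1}^k (Γ_h + γ_h)`. -/
noncomputable def thetaSeq (Γ γ : ℕ → ℝ) (k : ℕ) : ℝ := ∑ h ∈ Finset.Icc 1 k, (Γ h + γ h)

/-- `g` is a `k`-gentle atom for the bad set `B`: `g = B^(l)_{Γ_k}(x) ∩ B` for some `x ∈ B`,
`diam_l(g) ≤ Γ_k`, and `d_l(g, B \ g) > γ_k`. -/
def kAtom (Γ γ : ℕ → ℝ) (k : ℕ) (B : Set Site) (g : Set Site) : Prop :=
  (∃ x ∈ B, g = ball1 (Γ k) x ∩ B) ∧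
    (∀ x ∈ g, ∀ y ∈ g, (dist1 x y : ℝ) ≤ Γ k) ∧
    ∀ x ∈ g, ∀ y ∈ B \ g, γ k < (dist1 x y : ℝ)

/-- The union of all `k`-gentle atoms of the bad set `B`. -/
def gentleStep (Γ γ : ℕ → ℝ) (k : ℕ) (B : Set Site) : Set Site :=
  {y | ∃ g : Set Site, kAtom Γ γ k B g ∧ y ∈ g}

/-- The `k`-bad sites `BB_k(ω)`:  `BB_0(ω) = {i : ω_i = 1}` and
`BB_k(ω) = BB_{k-1}(ω) \ GG_k(ω)`. -/
def BB (Γ γ : ℕ → ℝ) (ω : Omega) : ℕ → Set Site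
  | 0 => {i | ω i = true}
  | k + 1 => BB Γ γ ω k \ gentleStep Γ γ (k + 1) (BB Γ γ ω k)

/-- The `k`-gentle sites `GG_k(ω)`:  `GG_0(ω) = {i : ω_i = 0}` and, for `k ≥ 1`,
`GG_k(ω)` is the union of the `k`-gentle atoms of `BB_{k-1}(ω)`. -/
def GG (Γ γ : ℕ → ℝ) (ω : Omega) : ℕ → Set Site
  | 0 => {i | ω i = false}
  | k + 1 => gentleStep Γ γ (k + 1) (BB Γ γ ω k)

/-- The annulus `A_k(x) = B^(l)_{γ_k+Γ_k}(x) \ B^(l)_{(Γ_k-1)/2}(x)`. -/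
def annulus (Γ γ : ℕ → ℝ) (k : ℕ) (x : Site) : Set Site :=
  ball1 (γ k + Γ k) x \ ball1 ((Γ k - 1) / 2) x

lemma dist1_triangle (x y z : Site) : dist1 x z ≤ dist1 x y + dist1 y z := by
  simp only [dist1]
  have h1 : (x.1 - z.1) = (x.1 - y.1) + (y.1 - z.1) := by ring
  have h2 : (x.2 - z.2) = (x.2 - y.2) + (y.2 - z.2) := by ring
  rw [h1, h2]
  have a1 := Int.natAbs_add_le (x.1 - y.1) (y.1 - z.1)
  have a2 := Int.natAbs_add_le (x.2 - y.2) (y.2 - z.2)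
  omega

lemma dist1_comm (x y : Site) : dist1 x y = dist1 y x := by
  simp only [dist1]
  omega

/-- A bad site that fails to become gentle has a bad companion in the
annulus: if `x ∈ BB_k(ω)` and `x ∉ GG_{k+1}(ω)`, then there is
`y ∈ A_{k+1}(x) = B^(l)_{γ_{k+1}+Γ_{k+1}}(x) \ B^(l)_{(Γ_{k+1}-1)/2}(x)` with `y ∈ BB_k(ω)`. -/
theorem bad_companion_in_annulus (Γ γ : ℕ → ℝ)
    (hΓpos : ∀ k, 1 ≤ k → 0 < Γ k) (hγpos : ∀ k, 1 ≤ k → 0 < γ k)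
    (hΓmono : ∀ k, 1 ≤ k → Γ k < Γ (k + 1)) (hγmono : ∀ k, 1 ≤ k → γ k < γ (k + 1))
    (ω : Omega) (k : ℕ) (x : Site)
    (hbad : x ∈ BB Γ γ ω k) (hnot : x ∉ GG Γ γ ω (k + 1)) :
    ∃ y ∈ annulus Γ γ (k + 1) x, y ∈ BB Γ γ ω k := by
  set B := BB Γ γ ω k with hB
  have hΓ : 0 < Γ (k + 1) := hΓpos (k + 1) (by omega)
  have hγ : 0 < γ (k + 1) := hγpos (k + 1) (by omega)
  set g : Set Site := ball1 (Γ (k + 1)) x ∩ B with hg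
  have hxg : x ∈ g := by
    refine ⟨?_, hbad⟩
    show (dist1 x x : ℝ) ≤ Γ (k + 1)
    simp [dist1]
    linarith
  have hnotatom : ¬ kAtom Γ γ (k + 1) B g := fun h => hnot ⟨g, h, hxg⟩
  have hdiam_or : (¬ ∀ a ∈ g, ∀ b ∈ g, (dist1 a b : ℝ) ≤ Γ (k + 1)) ∨
      (¬ ∀ a ∈ g, ∀ y ∈ B \ g, γ (k + 1) < (dist1 a y : ℝ)) := by
    by_contra h
    push_neg at h
    exact hnotatom ⟨⟨x, hbad, rfl⟩, h.1, h.2⟩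
  rcases hdiam_or with hd | hs
  · push_neg at hd
    obtain ⟨a, ha, b, hb, hab⟩ := hd
    have hxa : (dist1 x a : ℝ) ≤ Γ (k + 1) := ha.1
    have hxb : (dist1 x b : ℝ) ≤ Γ (k + 1) := hb.1
    have htri : dist1 a b ≤ dist1 x a + dist1 x b := by
      have := dist1_triangle a x b
      rw [dist1_comm a x] at this
      exact this
    have htri' : (dist1 a b : ℝ) ≤ (dist1 x a : ℝ) + (dist1 x b : ℝ) := by
      exact_mod_cast htri
    by_cases hc : (dist1 x a : ℝ) ≤ (dist1 x b : ℝ)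
    · refine ⟨b, ⟨show (dist1 x b : ℝ) ≤ γ (k + 1) + Γ (k + 1) by linarith, ?_⟩, hb.2⟩
      show ¬ (dist1 x b : ℝ) ≤ (Γ (k + 1) - 1) / 2
      intro h; linarith
    · refine ⟨a, ⟨show (dist1 x a : ℝ) ≤ γ (k + 1) + Γ (k + 1) by linarith, ?_⟩, ha.2⟩
      show ¬ (dist1 x a : ℝ) ≤ (Γ (k + 1) - 1) / 2
      intro h; push_neg at hc; linarith
  · push_neg at hs
    obtain ⟨a, ha, y, hy, hay⟩ := hs
    have hxa : (dist1 x a : ℝ) ≤ Γ (k + 1) := ha.1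
    have hyB : y ∈ B := hy.1
    have hyball : ¬ (dist1 x y : ℝ) ≤ Γ (k + 1) := fun h => hy.2 ⟨h, hyB⟩
    push_neg at hyball
    have htri : dist1 x y ≤ dist1 x a + dist1 a y := dist1_triangle x a y
    have htri' : (dist1 x y : ℝ) ≤ (dist1 x a : ℝ) + (dist1 a y : ℝ) := by
      exact_mod_cast htri
    refine ⟨y, ⟨show (dist1 x y : ℝ) ≤ γ (k + 1) + Γ (k + 1) by linarith, ?_⟩, hyB⟩
    show ¬ (dist1 x y : ℝ) ≤ (Γ (k + 1) - 1) / 2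
    intro h; linarith
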